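/- If s ∈ S and ξ ∈ Ω_{s⋆ * s}, then λ_s(ξ) ∈ Ω_{s * s⋆}. In particular λ_s(ξ) is again an ultrafilter. -/
import Mathlib


/-- An inverse semigroup with zero: every element `s` has a unique generalized
inverse `star s`, and `0` is absorbing. -/
class InverseSemigroupWithZero (S : Type*) extends Semigroup S, Zero S, Star S where
  zero_mul : ∀ s : S, 0 * s = 0
  mul_zero : ∀ s : S, s * 0 = 0
  mul_star_mul_self : ∀ s : S, s * star s * s = s
  star_mul_self_star : ∀ s : S, star s * s * star s = star s
  star_unique : ∀ s x : S, s * x * s = s → x * s * x = x → x = star s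

variable {S : Type*} [InverseSemigroupWithZero S]

/-- The natural partial order on an inverse semigroup: `s ≤ t` iff `t * s⋆ * s = s`. -/
def natLe (s t : S) : Prop := t * star s * s = s

/-- A filter in the inverse semigroup `S` (w.r.t. the natural partial order). -/
def IsFilterS (ξ : Set S) : Prop :=
  ξ.Nonempty ∧ (0 : S) ∉ ξ ∧
    (∀ x ∈ ξ, ∀ y : S, natLe x y → y ∈ ξ) ∧
    ∀ x ∈ ξ, ∀ y ∈ ξ, ∃ z ∈ ξ, natLe z x ∧ natLe z y

/-- An ultrafilter: a filter maximal under inclusion. -/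
def IsUltraS (ξ : Set S) : Prop :=
  IsFilterS ξ ∧ ∀ η : Set S, IsFilterS η → ξ ⊆ η → η = ξ

/-- The set `Ω` of all ultrafilters in `S`. -/
def OmegaAll (S : Type*) [InverseSemigroupWithZero S] : Set (Set S) := {ξ | IsUltraS ξ}

/-- `Ω_e`: the set of ultrafilters `ξ` with `eξ ⊆ ξ`. -/
def OmegaE (e : S) : Set (Set S) := {ξ | IsUltraS ξ ∧ ∀ t ∈ ξ, e * t ∈ ξ}

/-- The map `λₛ` on filters. -/
def lambdaMap (s : S) (ξ : Set S) : Set S := {u | ∃ t ∈ ξ, natLe (s * t) u}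

/-- `y` is dense in `x` (for idempotents `y ≤ x`): there is no nonzero idempotent
`z ≤ x` with `z * y = 0`. -/
def DenseIn (y x : S) : Prop :=
  ∀ z : S, IsIdempotentElem z → z * x = z → z * y = 0 → z = 0

/-- `s` essentially coincides with `t`. -/
def EssEq (s t : S) : Prop :=
  star s * s = star t * t ∧
    ∀ f : S, IsIdempotentElem f → f ≠ 0 → f * (star s * s) = f →
      ∃ e : S, IsIdempotentElem e ∧ e ≠ 0 ∧ e * f = e ∧ s * e = t * e

section AuxLemmas

private lemma isms (s : S) : s * star s * s = s :=
  InverseSemigroupWithZero.mul_star_mul_self s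

private lemma ismss (s : S) : star s * s * star s = star s :=
  InverseSemigroupWithZero.star_mul_self_star s

private lemma izero_mul (s : S) : (0 : S) * s = 0 := InverseSemigroupWithZero.zero_mul s

private lemma imul_zero (s : S) : s * (0 : S) = 0 := InverseSemigroupWithZero.mul_zero s

private lemma istar_star (s : S) : star (star s) = s :=
  (InverseSemigroupWithZero.star_unique (star s) s (ismss s) (isms s)).symm

private lemma istar_idem {e : S} (he : e * e = e) : star e = e :=
  (InverseSemigroupWithZero.star_unique e e (by rw [he, he]) (by rw [he, he])).symm

private lemma iidem_ss (s : S) : (star s * s) * (star s * s) = star s * s := by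
  rw [← mul_assoc, ismss]

private lemma iidem_sss (s : S) : (s * star s) * (s * star s) = s * star s := by
  rw [← mul_assoc, isms]

private lemma iidem_mul {a b : S} (ha : a * a = a) (hb : b * b = b) :
    (a * b) * (a * b) = a * b := by
  have ha' : ∀ t : S, a * (a * t) = a * t := fun t => by rw [← mul_assoc, ha]
  have hb' : ∀ t : S, b * (b * t) = b * t := fun t => by rw [← mul_assoc, hb]
  set x := star (a * b) with hx
  have H2 : ∀ t : S, x * (a * (b * (x * t))) = x * t := by
    intro t
    have h := congrArg (· * t) (ismss (a * b))
    simp only [← hx, mul_assoc] at h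
    simpa only [mul_assoc] using h
  have hp : (a * b) * (b * x * a) * (a * b) = a * b := by
    have h0 := isms (a * b)
    simp only [← hx, mul_assoc] at h0
    simp only [mul_assoc, ha', hb']
    simpa only [mul_assoc] using h0
  have hq : (b * x * a) * (a * b) * (b * x * a) = b * x * a := by
    simp only [mul_assoc, ha', hb', H2]
  have hfxe : b * x * a = x := by
    have := InverseSemigroupWithZero.star_unique (a * b) (b * x * a) hp hq
    rwa [← hx] at this
  have hxx : x * x = x := by
    conv_lhs => rw [← hfxe]
    simp only [mul_assoc]
    rw [H2, ← mul_assoc]; exact hfxe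
  have hab : a * b = x := by
    calc a * b = star (star (a * b)) := (istar_star _).symm
      _ = star x := by rw [← hx]
      _ = x := istar_idem hxx
  rw [hab]; exact hxx

private lemma iidem_comm {e f : S} (he : e * e = e) (hf : f * f = f) :
    e * f = f * e := by
  have hef := iidem_mul he hf
  have hfe := iidem_mul hf he
  have he' : ∀ t : S, e * (e * t) = e * t := fun t => by rw [← mul_assoc, he]
  have hf' : ∀ t : S, f * (f * t) = f * t := fun t => by rw [← mul_assoc, hf]
  have h1 : (e * f) * (f * e) * (e * f) = e * f := by
    have h0 := hef
    simp only [mul_assoc] at h0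
    simp only [mul_assoc, he', hf']
    exact h0
  have h2 : (f * e) * (e * f) * (f * e) = f * e := by
    have h0 := hfe
    simp only [mul_assoc] at h0
    simp only [mul_assoc, he', hf']
    exact h0
  have := InverseSemigroupWithZero.star_unique (e * f) (f * e) h1 h2
  rw [this, istar_idem hef]

private lemma istar_mul (a b : S) : star (a * b) = star b * star a := by
  have hc := iidem_comm (iidem_ss a) (iidem_sss b)
  have h1 : (a * b) * (star b * star a) * (a * b) = a * b := by
    calc (a * b) * (star b * star a) * (a * b)
        = a * ((b * star b) * (star a * a)) * b := by simp only [mul_assoc]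
      _ = a * ((star a * a) * (b * star b)) * b := by rw [← hc]
      _ = (a * star a * a) * (b * star b * b) := by simp only [mul_assoc]
      _ = a * b := by rw [isms, isms]
  have h2 : (star b * star a) * (a * b) * (star b * star a) = star b * star a := by
    calc (star b * star a) * (a * b) * (star b * star a)
        = star b * ((star a * a) * (b * star b)) * star a := by simp only [mul_assoc]
      _ = star b * ((b * star b) * (star a * a)) * star a := by rw [hc]
      _ = (star b * b * star b) * (star a * a * star a) := by simp only [mul_assoc]
      _ = star b * star a := by rw [ismss, ismss]
  exact (InverseSemigroupWithZero.star_unique (a * b) _ h1 h2).symm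

private lemma natLe_refl (a : S) : natLe a a := isms a

private lemma natLe_zero {a : S} (h : natLe a 0) : a = 0 := by
  unfold natLe at h
  rw [izero_mul, izero_mul] at h
  exact h.symm

private lemma natLe_mul_right_idem {e : S} (b : S) (he : e * e = e) : natLe (b * e) b := by
  show b * star (b * e) * (b * e) = b * e
  rw [istar_mul, istar_idem he]
  have hc := iidem_comm he (iidem_ss b)
  calc b * (e * star b) * (b * e)
      = b * (e * (star b * b)) * e := by simp only [mul_assoc]
    _ = b * ((star b * b) * e) * e := by rw [hc]
    _ = (b * star b * b) * (e * e) := by simp only [mul_assoc]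
    _ = b * e := by rw [isms, he]

private lemma natLe_mul_left_idem {e : S} (b : S) (he : e * e = e) : natLe (e * b) b := by
  show b * star (e * b) * (e * b) = e * b
  rw [istar_mul, istar_idem he]
  have hc := iidem_comm (iidem_sss b) he
  calc b * (star b * e) * (e * b)
      = (b * star b) * (e * e) * b := by simp only [mul_assoc]
    _ = ((b * star b) * e) * b := by rw [he]
    _ = (e * (b * star b)) * b := by rw [hc]
    _ = e * (b * star b * b) := by simp only [mul_assoc]
    _ = e * b := by rw [isms]

private lemma natLe_trans {a b c : S} (hab : natLe a b) (hbc : natLe b c) : natLe a c := by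
  have hae : b * (star a * a) = a := by rw [← mul_assoc]; exact hab
  have he := iidem_ss a
  have hc := iidem_comm he (iidem_ss b)
  have hkey : star a * a = (star b * b) * (star a * a) := by
    conv_lhs => rw [← hae]
    rw [istar_mul, istar_idem he]
    calc (star a * a) * star b * (b * (star a * a))
        = ((star a * a) * (star b * b)) * (star a * a) := by simp only [mul_assoc]
      _ = ((star b * b) * (star a * a)) * (star a * a) := by rw [hc]
      _ = (star b * b) * ((star a * a) * (star a * a)) := by simp only [mul_assoc]
      _ = (star b * b) * (star a * a) := by rw [he]
  show c * star a * a = a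
  rw [mul_assoc, hkey, ← mul_assoc, ← mul_assoc c (star b) b, hbc]
  exact hae

private lemma natLe_mul_left {a b : S} (c : S) (hab : natLe a b) : natLe (c * a) (c * b) := by
  have hae : b * (star a * a) = a := by rw [← mul_assoc]; exact hab
  have h := natLe_mul_right_idem (c * b) (iidem_ss a)
  have h2 : (c * b) * (star a * a) = c * a := by rw [mul_assoc, hae]
  rwa [h2] at h

private lemma lambda_isFilter {a : S} {η : Set S} (hη : IsFilterS η)
    (h0 : ∀ t ∈ η, a * t ≠ 0) : IsFilterS (lambdaMap a η) := by
  obtain ⟨⟨w, hw⟩, hz, hup, hdir⟩ := hη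
  refine ⟨⟨a * w, w, hw, natLe_refl _⟩, ?_, ?_, ?_⟩
  · rintro ⟨t, ht, hle⟩
    exact h0 t ht (natLe_zero hle)
  · rintro x ⟨t, ht, h1⟩ y h2
    exact ⟨t, ht, natLe_trans h1 h2⟩
  · rintro x ⟨t1, ht1, h1⟩ y ⟨t2, ht2, h2⟩
    obtain ⟨z, hzη, hz1, hz2⟩ := hdir t1 ht1 t2 ht2
    exact ⟨a * z, ⟨z, hzη, natLe_refl _⟩,
      natLe_trans (natLe_mul_left a hz1) h1,
      natLe_trans (natLe_mul_left a hz2) h2⟩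

end AuxLemmas

theorem lambdaMap_mem_omegaE (s : S) (ξ : Set S) (h : ξ ∈ OmegaE (star s * s)) :
    lambdaMap s ξ ∈ OmegaE (s * star s) := by
  obtain ⟨hu, hinv⟩ := h
  have hnz : ∀ t ∈ ξ, s * t ≠ 0 := by
    intro t ht hst
    have hmem : star s * s * t ∈ ξ := hinv t ht
    rw [mul_assoc, hst, imul_zero] at hmem
    exact hu.1.2.1 hmem
  have hF : IsFilterS (lambdaMap s ξ) := lambda_isFilter hu.1 hnz
  refine ⟨⟨hF, ?_⟩, ?_⟩
  · -- maximality
    intro η hηf hsub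
    have hG0 : ∀ t ∈ η, star s * t ≠ 0 := by
      intro t ht hc
      obtain ⟨w, hw⟩ := hu.1.1
      have hsw : s * w ∈ η := hsub ⟨w, hw, natLe_refl _⟩
      obtain ⟨z, hzη, hz1, hz2⟩ := hηf.2.2.2 t ht (s * w) hsw
      have hzz : s * w * star z * z = z := hz2
      have hssz : s * star s * z = z := by
        conv_lhs => rw [← hzz]
        simp only [← mul_assoc]
        rw [isms]
        exact hzz
      have h1 : natLe (star s * z) (star s * t) := natLe_mul_left (star s) hz1
      rw [hc] at h1
      have h2 : star s * z = 0 := natLe_zero h1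
      have hz0 : z = 0 := by rw [← hssz, mul_assoc, h2, imul_zero]
      exact hηf.2.1 (hz0 ▸ hzη)
    have hGf : IsFilterS (lambdaMap (star s) η) := lambda_isFilter hηf hG0
    have hξG : ξ ⊆ lambdaMap (star s) η := by
      intro u hu'
      refine ⟨s * u, hsub ⟨u, hu', natLe_refl _⟩, ?_⟩
      have h := natLe_mul_left_idem u (iidem_ss s)
      rwa [mul_assoc] at h
    have hGξ : lambdaMap (star s) η = ξ := hu.2 _ hGf hξG
    refine Set.Subset.antisymm ?_ hsub
    intro u huη
    have h1 : star s * u ∈ ξ := by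
      rw [← hGξ]; exact ⟨u, huη, natLe_refl _⟩
    refine ⟨star s * u, h1, ?_⟩
    have h := natLe_mul_left_idem u (iidem_sss s)
    rwa [mul_assoc] at h
  · -- invariance
    rintro u ⟨t, ht, hle⟩
    refine ⟨t, ht, ?_⟩
    have h := natLe_mul_left (s * star s) hle
    have he : (s * star s) * (s * t) = s * t := by rw [← mul_assoc, isms]
    rwa [he] at h
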